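/- Let w ∈ W be a non-spiral element of the affine Weyl group of type Ã₂, let α be the unique root pointing into the chamber of w, and let k ∈ ℤ be such that k − 1 < (α,v) < k for all v ∈ wA₀ (the alcove of w lies between H_{α,k−1} and H_{α,k}). Then k ≥ 1. Moreover, if cl(wA₀) ∩ H_{α,k} contains more than one point (it is an edge of the alcove wA₀), then ℓ(s_{α,k}w) = ℓ(w) + 1; and if cl(wA₀) ∩ H_{α,k} is a single point (a vertex of the alcove), then ℓ(s_{α,k}w) = ℓ(w) + 3. -/

import Mathlib

noncomputable section

open scoped RealInnerProductSpace

/-- The plane `V = ℝ²`. -/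
abbrev V : Type := EuclideanSpace ℝ (Fin 2)

/-- The affine reflection in the hyperplane `H_{α,k}`. -/
def sRefl (α : V) (k : ℤ) (v : V) : V := v - (⟪α, v⟫ - (k : ℝ)) • α

/-- The positive roots `α₁, α₂, α̃ = α₁ + α₂` of the `A₂` root system. -/
def PosRoots (a1 a2 : V) : Set V := {a1, a2, a1 + a2}

/-- The root system `Φ` of type `A₂`. -/
def Phi (a1 a2 : V) : Set V := {α | α ∈ PosRoots a1 a2 ∨ -α ∈ PosRoots a1 a2}

/-- A permutation of `V` acting as the affine reflection `s_{α,k}` for some `α ∈ Φ`, `k ∈ ℤ`. -/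
def IsAffRefl (a1 a2 : V) (g : Equiv.Perm V) : Prop :=
  ∃ α ∈ Phi a1 a2, ∃ k : ℤ, ∀ v : V, g v = sRefl α k v

/-- The affine Weyl group of type `Ã₂`: the group of (affine) transformations of `V`
generated by all the affine reflections `s_{α,k}`, `α ∈ Φ`, `k ∈ ℤ`. -/
def AffWeyl (a1 a2 : V) : Subgroup (Equiv.Perm V) :=
  Subgroup.closure {g | IsAffRefl a1 a2 g}

/-- The action of an element of the affine Weyl group on the plane `V`. -/
def act {a1 a2 : V} (w : AffWeyl a1 a2) (v : V) : V := (w : Equiv.Perm V) v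

/-- `g` is one of the simple reflections `s₁ = s_{α₁,0}`, `s₂ = s_{α₂,0}`, `s₀ = s_{α̃,1}`. -/
def IsSimpleRefl (a1 a2 : V) (g : Equiv.Perm V) : Prop :=
  (∀ v : V, g v = sRefl a1 0 v) ∨ (∀ v : V, g v = sRefl a2 0 v) ∨
    (∀ v : V, g v = sRefl (a1 + a2) 1 v)

/-- The length function of the affine Weyl group `W` of type `Ã₂`, with respect to the
simple reflections. -/
def len (a1 a2 : V) (w : AffWeyl a1 a2) : ℕ :=
  sInf {n | ∃ l : List (AffWeyl a1 a2),
    (∀ g ∈ l, IsSimpleRefl a1 a2 (g : Equiv.Perm V)) ∧ l.length = n ∧ l.prod = w}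

/-- The reflections of `W` are the `s_{α,k}`, `α ∈ Φ`, `k ∈ ℤ`. -/
def IsReflW (a1 a2 : V) (g : Equiv.Perm V) : Prop := IsAffRefl a1 a2 g

/-- The Bruhat order on `W`: the partial order generated by `u < r * u` whenever `r` is a
reflection and `ℓ(u) < ℓ(r * u)`. -/
def BruhatLE (a1 a2 : V) (x w : AffWeyl a1 a2) : Prop :=
  Relation.ReflTransGen
    (fun a b => ∃ r : AffWeyl a1 a2, IsReflW a1 a2 (r : Equiv.Perm V) ∧ b = r * a ∧
      len a1 a2 a < len a1 a2 b) x w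

/-- The strict Bruhat order. -/
def BruhatLT (a1 a2 : V) (x w : AffWeyl a1 a2) : Prop := BruhatLE a1 a2 x w ∧ x ≠ w

/-- The fundamental alcove `A₀`. -/
def A0 (a1 a2 : V) : Set V :=
  {v | 0 < ⟪a1, v⟫ ∧ 0 < ⟪a2, v⟫ ∧ ⟪a1 + a2, v⟫ < 1}

/-- The fundamental `α`-root strip. -/
def Strip (α : V) : Set V := {v | 0 ≤ ⟪α, v⟫ ∧ ⟪α, v⟫ ≤ 1}

/-- The union of the three fundamental root strips. -/
def StripUnion (a1 a2 : V) : Set V := Strip a1 ∪ Strip a2 ∪ Strip (a1 + a2)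

/-- `w` is spiral if the alcove center `w q` lies in a fundamental root strip. -/
def IsSpiral (a1 a2 q : V) (w : AffWeyl a1 a2) : Prop :=
  (w : Equiv.Perm V) q ∈ StripUnion a1 a2

/-- The chambers: connected components of the complement of the union of the fundamental
root strips. -/
def IsChamber (a1 a2 : V) (C : Set V) : Prop :=
  ∃ v ∈ (StripUnion a1 a2)ᶜ, C = connectedComponentIn (StripUnion a1 a2)ᶜ v

/-- The chamber containing the alcove center `w q` (for non-spiral `w`). -/
def chamberOf (a1 a2 q : V) (w : AffWeyl a1 a2) : Set V :=
  connectedComponentIn (StripUnion a1 a2)ᶜ ((w : Equiv.Perm V) q)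

/-- The root hyperplane (line) `H_{α,k}`. -/
def Hplane (α : V) (k : ℤ) : Set V := {v | ⟪α, v⟫ = (k : ℝ)}

/-- `H_{α,i}` (with `α` a positive root and `i ∈ {0,1}`) is a wall of the chamber `C`:
the boundary of `C` meets `H_{α,i}` in more than one point (a ray). -/
def IsWall (a1 a2 : V) (C : Set V) (α : V) (i : ℤ) : Prop :=
  α ∈ PosRoots a1 a2 ∧ (i = 0 ∨ i = 1) ∧
    ∃ u ∈ frontier C ∩ Hplane α i, ∃ v ∈ frontier C ∩ Hplane α i, u ≠ v

/-- A chamber is even if both of its walls are among the fixed hyperplanes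
`H_{α₁,0}, H_{α₂,0}, H_{α̃,1}` of the simple reflections. -/
def IsEvenChamber (a1 a2 : V) (C : Set V) : Prop :=
  IsChamber a1 a2 C ∧ ∀ α i, IsWall a1 a2 C α i →
    ((α = a1 ∧ i = 0) ∨ (α = a2 ∧ i = 0) ∨ (α = a1 + a2 ∧ i = 1))

/-- `q^w_x = n^w_x - ℓ(w)`, where `n^w_x` is the number of reflections `r` with `r x ≤ w`. -/
def qInt (a1 a2 : V) (w x : AffWeyl a1 a2) : ℤ :=
  (Set.ncard {r : AffWeyl a1 a2 |
      IsReflW a1 a2 (r : Equiv.Perm V) ∧ BruhatLE a1 a2 (r * x) w} : ℤ)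
    - (len a1 a2 w : ℤ)

/-- The root `α ∈ Φ` points into the chamber `C`. -/
def PointsInto (a1 a2 : V) (C : Set V) (α : V) : Prop :=
  α ∈ Phi a1 a2 ∧ ∀ v ∈ C, v + α ∈ C

/-- `L(w)`: the subgroup generated by the simple reflections `s` with `s w < w`. -/
def Lsub (a1 a2 : V) (w : AffWeyl a1 a2) : Subgroup (AffWeyl a1 a2) :=
  Subgroup.closure {s | IsSimpleRefl a1 a2 (s : Equiv.Perm V) ∧ BruhatLT a1 a2 (s * w) w}

/-- `w` is twisted spiral if `w = z s` with `z` spiral of even length, `s` simple, and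
`ℓ(w) = ℓ(z) + 1`. -/
def IsTwistedSpiral (a1 a2 q : V) (w : AffWeyl a1 a2) : Prop :=
  ∃ z s : AffWeyl a1 a2, IsSpiral a1 a2 q z ∧ Even (len a1 a2 z) ∧
    IsSimpleRefl a1 a2 (s : Equiv.Perm V) ∧ w = z * s ∧ len a1 a2 w = len a1 a2 z + 1

/-!
In the coordinates `x ↦ (⟪α₁, x⟫, ⟪α₂, x⟫)` every `w ∈ W` acts as an element of the finite Weyl
group `S₃` followed by a translation in the root lattice. Hence `w q` has coordinates
`(m + e/3, n + e/3)` with `e ∈ {1, 2}`, and `w` is determined by `w q`. The length `ℓ(w)` is the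
number `|⌊⟪α₁, w q⟫⌋| + |⌊⟪α₂, w q⟫⌋| + |⌊⟪α̃, w q⟫⌋|` of walls separating `w A₀` from `A₀`: a
simple reflection changes this count by one, and some simple reflection lowers it unless `w = 1`.

Since `α` points into the chamber of `w`, `⟪β, w q⟫ > 1` when `⟪β, α⟫ = 1` and `⟪β, w q⟫ < 0` when
`⟪β, α⟫ = -1`. Reflecting in `H_{α,k}` therefore removes no wall: it adds the wall `H_{α,k}`
itself, and adds one wall for each of the two other positive roots exactly when `H_{α,k}` meets
the closed alcove in a vertex, i.e. when `⟪α, w q⟫ = k - 2/3` rather than `k - 1/3`.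
-/

structure IsA2Basis (a1 a2 : V) : Prop where
  inner_a1_a1 : ⟪a1, a1⟫ = 2
  inner_a2_a2 : ⟪a2, a2⟫ = 2
  inner_a1_a2 : ⟪a1, a2⟫ = -1

/-- The coefficients `(p₁, p₂)` of the roots `p₁ α₁ + p₂ α₂ ∈ Φ`. -/
def rootCoeffs : Finset (ℤ × ℤ) := {(1, 0), (0, 1), (1, 1), (-1, 0), (0, -1), (-1, -1)}

def rootOf (a1 a2 : V) (p : ℤ × ℤ) : V := (p.1 : ℝ) • a1 + (p.2 : ℝ) • a2

/-- The point with coordinates `(⟪a1, ·⟫, ⟪a2, ·⟫) = (s, t)`. -/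
def ofCoords (a1 a2 : V) (s t : ℝ) : V := ((2 * s + t) / 3) • a1 + ((s + 2 * t) / 3) • a2

theorem inner_sRefl (β α : V) (k : ℤ) (v : V) :
    ⟪β, sRefl α k v⟫ = ⟪β, v⟫ - (⟪α, v⟫ - k) * ⟪β, α⟫ := by
  simp only [sRefl, inner_sub_right, real_inner_smul_right]

theorem sRefl_sRefl {α : V} (hα : ⟪α, α⟫ = 2) (k : ℤ) (v : V) :
    sRefl α k (sRefl α k v) = v := by
  rw [sRefl, inner_sRefl, hα, sRefl, sub_sub, ← add_smul]
  ring_nf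
  simp

theorem isometry_sRefl {α : V} (hα : ⟪α, α⟫ = 2) (k : ℤ) : Isometry (sRefl α k) := by
  refine Isometry.of_dist_eq fun x y => ?_
  have hd : sRefl α k x - sRefl α k y = (x - y) - ⟪α, x - y⟫ • α := by
    simp only [sRefl, inner_sub_right]
    module
  rw [dist_eq_norm, dist_eq_norm, hd, ← sq_eq_sq₀ (norm_nonneg _) (norm_nonneg _),
    norm_sub_sq_real, real_inner_smul_right, norm_smul, mul_pow, Real.norm_eq_abs, sq_abs,
    ← real_inner_self_eq_norm_sq α, hα, real_inner_comm]
  ring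

theorem inner_rootOf_left (a1 a2 : V) (p : ℤ × ℤ) (v : V) :
    ⟪rootOf a1 a2 p, v⟫ = p.1 * ⟪a1, v⟫ + p.2 * ⟪a2, v⟫ := by
  rw [rootOf, inner_add_left, real_inner_smul_left, real_inner_smul_left]

theorem rootOf_mem_phi {a1 a2 : V} {p : ℤ × ℤ} (hp : p ∈ rootCoeffs) :
    rootOf a1 a2 p ∈ Phi a1 a2 := by
  simp only [rootCoeffs, Finset.mem_insert, Finset.mem_singleton] at hp
  rcases hp with rfl | rfl | rfl | rfl | rfl | rfl <;>
    simp [rootOf, Phi, PosRoots, add_comm]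

theorem rootOf_one_zero (a1 a2 : V) : rootOf a1 a2 (1, 0) = a1 := by simp [rootOf]

theorem rootOf_zero_one (a1 a2 : V) : rootOf a1 a2 (0, 1) = a2 := by simp [rootOf]

theorem rootOf_one_one (a1 a2 : V) : rootOf a1 a2 (1, 1) = a1 + a2 := by simp [rootOf]

def IsCoordAffine (a1 a2 : V) (g : V → V) (M : Matrix (Fin 2) (Fin 2) ℤ) (u v : ℤ) : Prop :=
  ∀ x, ⟪a1, g x⟫ = M 0 0 * ⟪a1, x⟫ + M 0 1 * ⟪a2, x⟫ + u ∧
    ⟪a2, g x⟫ = M 1 0 * ⟪a1, x⟫ + M 1 1 * ⟪a2, x⟫ + v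

/-- The finite Weyl group `W₀ ≅ S₃` in the coordinates `(⟪a1, ·⟫, ⟪a2, ·⟫)`. -/
def weylMatrices : Finset (Matrix (Fin 2) (Fin 2) ℤ) :=
  {1, !![-1, 0; 1, 1], !![1, 1; 0, -1], !![-1, -1; 1, 0], !![0, 1; -1, -1], !![0, -1; -1, 0]}

/-- The linear part `x ↦ x - ⟪α, x⟫ α` of `s_{α,k}`, for `α = p₁ α₁ + p₂ α₂`. -/
def reflMatrix (p : ℤ × ℤ) : Matrix (Fin 2) (Fin 2) ℤ :=
  !![1 - (2 * p.1 - p.2) * p.1, -((2 * p.1 - p.2) * p.2);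
    -((2 * p.2 - p.1) * p.1), 1 - (2 * p.2 - p.1) * p.2]

theorem reflMatrix_mem : ∀ p ∈ rootCoeffs, reflMatrix p ∈ weylMatrices := by decide

theorem weylMatrices_mul_mem : ∀ M ∈ weylMatrices, ∀ N ∈ weylMatrices, M * N ∈ weylMatrices := by
  decide

theorem weylMatrices_rowSum :
    ∀ M ∈ weylMatrices, 3 ∣ M 0 0 + M 0 1 - (M 1 0 + M 1 1) ∧ ¬ 3 ∣ M 0 0 + M 0 1 := by
  decide

theorem weylMatrices_permutes_roots : ∀ M ∈ weylMatrices, ∀ p ∈ rootCoeffs,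
    (p.1 * M 0 0 + p.2 * M 1 0, p.1 * M 0 1 + p.2 * M 1 1) ∈ rootCoeffs := by
  decide

theorem IsCoordAffine.comp {a1 a2 : V} {g g' : V → V} {M N : Matrix (Fin 2) (Fin 2) ℤ}
    {u v u' v' : ℤ} (hg : IsCoordAffine a1 a2 g M u v) (hg' : IsCoordAffine a1 a2 g' N u' v') :
    IsCoordAffine a1 a2 (g ∘ g') (M * N) (M 0 0 * u' + M 0 1 * v' + u)
      (M 1 0 * u' + M 1 1 * v' + v) := by
  intro x
  simp only [Function.comp_apply, (hg _).1, (hg _).2, (hg' x).1, (hg' x).2, Matrix.mul_apply,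
    Fin.sum_univ_two]
  constructor <;> push_cast <;> ring

/-- The simple reflections `s₁, s₂, s₀` are `s_{α,k}` for `(α, k) = (α₁, 0), (α₂, 0), (α̃, 1)`. -/
def simpleReflData : Finset ((ℤ × ℤ) × ℤ) := {((1, 0), 0), ((0, 1), 0), ((1, 1), 1)}

theorem fst_mem_rootCoeffs_of_mem_simpleReflData : ∀ d ∈ simpleReflData, d.1 ∈ rootCoeffs := by
  decide

theorem IsSimpleRefl.exists_eq_sRefl {a1 a2 : V} {g : Equiv.Perm V} (hg : IsSimpleRefl a1 a2 g) :
    ∃ d ∈ simpleReflData, ⇑g = sRefl (rootOf a1 a2 d.1) d.2 := by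
  rcases hg with hg | hg | hg
  · exact ⟨((1, 0), 0), by decide, by rw [rootOf_one_zero]; exact funext hg⟩
  · exact ⟨((0, 1), 0), by decide, by rw [rootOf_zero_one]; exact funext hg⟩
  · exact ⟨((1, 1), 1), by decide, by rw [rootOf_one_one]; exact funext hg⟩

theorem isSimpleRefl_of_eq_sRefl {a1 a2 : V} {g : Equiv.Perm V} {d : (ℤ × ℤ) × ℤ}
    (hd : d ∈ simpleReflData) (hg : ⇑g = sRefl (rootOf a1 a2 d.1) d.2) : IsSimpleRefl a1 a2 g := by
  simp only [simpleReflData, Finset.mem_insert, Finset.mem_singleton] at hd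
  rcases hd with rfl | rfl | rfl
  · exact Or.inl fun v => by rw [hg, rootOf_one_zero]
  · exact Or.inr (Or.inl fun v => by rw [hg, rootOf_zero_one])
  · exact Or.inr (Or.inr fun v => by rw [hg, rootOf_one_one])

/-- For `v` off the walls, `|⌊⟪β, v⟫⌋|` is the number of walls `H_{β,n}` separating `v` from
`A₀`. -/
def wallCount (a1 a2 v : V) : ℕ :=
  ⌊⟪a1, v⟫⌋.natAbs + ⌊⟪a2, v⟫⌋.natAbs + ⌊⟪a1 + a2, v⟫⌋.natAbs

theorem floor_coords {a1 a2 v : V} {m n e : ℤ} (he : e = 1 ∨ e = 2)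
    (hX : ⟪a1, v⟫ = m + e / 3) (hY : ⟪a2, v⟫ = n + e / 3) :
    ⌊⟪a1, v⟫⌋ = m ∧ ⌊⟪a2, v⟫⌋ = n ∧ ⌊⟪a1 + a2, v⟫⌋ = m + n + e - 1 := by
  have he' : (1 : ℝ) ≤ e ∧ (e : ℝ) ≤ 2 := by rcases he with rfl | rfl <;> norm_num
  have hXY : ⟪a1 + a2, v⟫ = m + n + 2 * e / 3 := by rw [inner_add_left, hX, hY]; ring
  refine ⟨Int.floor_eq_iff.mpr ⟨by linarith, by linarith⟩,
    Int.floor_eq_iff.mpr ⟨by linarith, by linarith⟩,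
    Int.floor_eq_iff.mpr ⟨by push_cast; linarith, by push_cast; linarith⟩⟩

theorem wallCount_eq {a1 a2 v : V} {m n e : ℤ} (he : e = 1 ∨ e = 2)
    (hX : ⟪a1, v⟫ = m + e / 3) (hY : ⟪a2, v⟫ = n + e / 3) :
    wallCount a1 a2 v = m.natAbs + n.natAbs + (m + n + e - 1).natAbs := by
  obtain ⟨f1, f2, f3⟩ := floor_coords he hX hY
  rw [wallCount, f1, f2, f3]

theorem wallCount_q {a1 a2 q : V} (hq1 : ⟪a1, q⟫ = 1 / 3) (hq2 : ⟪a2, q⟫ = 1 / 3) :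
    wallCount a1 a2 q = 0 := by
  rw [wallCount_eq (m := 0) (n := 0) (e := 1) (Or.inl rfl) (by rw [hq1]; norm_num)
    (by rw [hq2]; norm_num)]
  rfl

/-- The wall `H_{α,k}` adds `1` to the wall count; each of the two other positive roots adds `1`
exactly when `j = 2`, i.e. when `H_{α,k}` meets the closed alcove in a vertex. -/
theorem natAbs_reflect_toward_chamber {p : ℤ × ℤ} (hp : p ∈ rootCoeffs) {m n e m' n' e' k j : ℤ}
    (he : e = 1 ∨ e = 2) (he' : e' = 1 ∨ e' = 2) (hj : j = 1 ∨ j = 2)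
    (hb1 : (2 * p.1 - p.2 = 1 → 1 ≤ m) ∧ (2 * p.1 - p.2 = -1 → m < 0))
    (hb2 : (2 * p.2 - p.1 = 1 → 1 ≤ n) ∧ (2 * p.2 - p.1 = -1 → n < 0))
    (hb3 : (p.1 + p.2 = 1 → 1 ≤ m + n + e - 1) ∧ (p.1 + p.2 = -1 → m + n + e - 1 < 0))
    (hk : 3 * k = p.1 * (3 * m + e) + p.2 * (3 * n + e) + j)
    (hm' : 3 * m' + e' =
      3 * m + e - (p.1 * (3 * m + e) + p.2 * (3 * n + e) - 3 * k) * (2 * p.1 - p.2))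
    (hn' : 3 * n' + e' =
      3 * n + e - (p.1 * (3 * m + e) + p.2 * (3 * n + e) - 3 * k) * (2 * p.2 - p.1)) :
    1 ≤ k ∧ (m'.natAbs + n'.natAbs + (m' + n' + e' - 1).natAbs : ℤ) =
      m.natAbs + n.natAbs + (m + n + e - 1).natAbs + 2 * j - 1 := by
  rw [hk] at hm' hn'
  simp only [rootCoeffs, Finset.mem_insert, Finset.mem_singleton] at hp
  rcases hp with rfl | rfl | rfl | rfl | rfl | rfl <;> rcases he with rfl | rfl <;>
    rcases hj with rfl | rfl <;> rcases he' with rfl | rfl <;> norm_num at hb1 hb2 hb3 <;>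
    ring_nf at hk hm' hn' <;> exact ⟨by omega, by omega⟩

theorem one_lt_of_forall_add_natCast_notMem_Icc {t : ℝ} (ht : ∀ n : ℕ, t + n ∉ Set.Icc (0 : ℝ) 1) :
    1 < t := by
  by_contra! h1
  have h0 : t < 0 := by
    by_contra! h0
    exact ht 0 (by simpa using ⟨h0, h1⟩)
  have hfl : ⌊t⌋ < 0 := Int.floor_lt.mpr (by simpa using h0)
  -- `t - ⌊t⌋ = fract t ∈ [0, 1)`
  apply ht (-⌊t⌋).toNat
  rw [show (((-⌊t⌋).toNat : ℕ) : ℝ) = -⌊t⌋ by exact_mod_cast Int.toNat_of_nonneg (by omega)]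
  exact ⟨by linarith [Int.floor_le t], by linarith [Int.lt_floor_add_one t]⟩

theorem PointsInto.add_nsmul_mem {a1 a2 α v : V} {C : Set V} (hα : PointsInto a1 a2 C α)
    (hv : v ∈ C) (n : ℕ) : v + n • α ∈ C := by
  induction n with
  | zero => simpa
  | succ n ih => rw [succ_nsmul, ← add_assoc]; exact hα.2 _ ih

/-- `v + n α` stays in `C` for all `n : ℕ`, so `⟪β, v⟫ + n ⟪β, α⟫` never enters `[0, 1]`. -/
theorem PointsInto.floor_bounds {a1 a2 α v β : V} {C : Set V} (hα : PointsInto a1 a2 C α)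
    (hC : C ⊆ (StripUnion a1 a2)ᶜ) (hv : v ∈ C) (hβ : Strip β ⊆ StripUnion a1 a2) {c : ℤ}
    (hc : ⟪β, α⟫ = c) : (c = 1 → 1 ≤ ⌊⟪β, v⟫⌋) ∧ (c = -1 → ⌊⟪β, v⟫⌋ < 0) := by
  have key (n : ℕ) : ⟪β, v⟫ + n * c ∉ Set.Icc (0 : ℝ) 1 := fun hn =>
    hC (hα.add_nsmul_mem hv n) (hβ (by rwa [Strip, Set.mem_ofPred_eq, inner_add_right,
      inner_smul_right_eq_smul, hc, nsmul_eq_mul]))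
  refine ⟨fun h1 => ?_, fun h1 => ?_⟩
  · subst h1
    exact Int.le_floor.mpr (by simpa using (one_lt_of_forall_add_natCast_notMem_Icc
      (fun n => by simpa using key n)).le)
  · subst h1
    have := one_lt_of_forall_add_natCast_notMem_Icc (t := 1 - ⟪β, v⟫) fun n hn =>
      key n ⟨by push_cast; linarith [hn.2], by push_cast; linarith [hn.1]⟩
    exact Int.floor_lt.mpr (by push_cast; linarith)

namespace IsA2Basis

variable {a1 a2 q : V} (h : IsA2Basis a1 a2)
include h

theorem inner_a2_a1 : ⟪a2, a1⟫ = -1 := by rw [real_inner_comm, h.inner_a1_a2]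

theorem inner_a1_rootOf (p : ℤ × ℤ) : ⟪a1, rootOf a1 a2 p⟫ = 2 * p.1 - p.2 := by
  rw [rootOf, inner_add_right, real_inner_smul_right, real_inner_smul_right, h.inner_a1_a1,
    h.inner_a1_a2]
  ring

theorem inner_a2_rootOf (p : ℤ × ℤ) : ⟪a2, rootOf a1 a2 p⟫ = 2 * p.2 - p.1 := by
  rw [rootOf, inner_add_right, real_inner_smul_right, real_inner_smul_right, h.inner_a2_a1,
    h.inner_a2_a2]
  ring

theorem exists_coeffs_of_mem_phi {α : V} (hα : α ∈ Phi a1 a2) :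
    ∃ p ∈ rootCoeffs, α = rootOf a1 a2 p := by
  rcases hα with (rfl | rfl | rfl) | (h' | h' | h')
  · exact ⟨(1, 0), by decide, by simp [rootOf]⟩
  · exact ⟨(0, 1), by decide, by simp [rootOf]⟩
  · exact ⟨(1, 1), by decide, by simp [rootOf]⟩
  · exact ⟨(-1, 0), by decide, by simp [rootOf, ← h']⟩
  · exact ⟨(0, -1), by decide, by simp [rootOf, ← h']⟩
  · exact ⟨(-1, -1), by decide, by rw [← neg_neg α, h']; simp [rootOf]; abel⟩

theorem inner_self_of_mem_phi {α : V} (hα : α ∈ Phi a1 a2) : ⟪α, α⟫ = 2 := by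
  obtain ⟨p, hp, rfl⟩ := h.exists_coeffs_of_mem_phi hα
  have key : ∀ p ∈ rootCoeffs, p.1 * (2 * p.1 - p.2) + p.2 * (2 * p.2 - p.1) = 2 := by decide
  rw [inner_rootOf_left, h.inner_a1_rootOf, h.inner_a2_rootOf]
  exact_mod_cast key p hp

theorem ext {x y : V} (h1 : ⟪a1, x⟫ = ⟪a1, y⟫) (h2 : ⟪a2, x⟫ = ⟪a2, y⟫) : x = y := by
  have h1' := h.inner_a1_a1
  have h2' := h.inner_a2_a2
  have h12 := h.inner_a1_a2
  simp only [PiLp.inner_apply, Fin.sum_univ_two, RCLike.inner_apply, conj_trivial] at *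
  -- `det(a1, a2)² = ⟪a1, a1⟫ ⟪a2, a2⟫ - ⟪a1, a2⟫² = 3`
  have hdet : a1 0 * a2 1 - a1 1 * a2 0 ≠ 0 := by
    intro h0
    nlinarith
  ext i
  fin_cases i
  · exact sub_eq_zero.mp ((mul_eq_zero.mp (by linear_combination a2 1 * h1 - a1 1 * h2 :
      (a1 0 * a2 1 - a1 1 * a2 0) * (x 0 - y 0) = 0)).resolve_left hdet)
  · exact sub_eq_zero.mp ((mul_eq_zero.mp (by linear_combination a1 0 * h2 - a2 0 * h1 :
      (a1 0 * a2 1 - a1 1 * a2 0) * (x 1 - y 1) = 0)).resolve_left hdet)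

theorem inner_a1_ofCoords (s t : ℝ) : ⟪a1, ofCoords a1 a2 s t⟫ = s := by
  rw [ofCoords, inner_add_right, real_inner_smul_right, real_inner_smul_right, h.inner_a1_a1,
    h.inner_a1_a2]
  ring

theorem inner_a2_ofCoords (s t : ℝ) : ⟪a2, ofCoords a1 a2 s t⟫ = t := by
  rw [ofCoords, inner_add_right, real_inner_smul_right, real_inner_smul_right, h.inner_a2_a1,
    h.inner_a2_a2]
  ring

theorem inv_eq_self_of_isAffRefl {g : Equiv.Perm V} (hg : IsAffRefl a1 a2 g) : g⁻¹ = g := by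
  obtain ⟨α, hα, k, hgk⟩ := hg
  refine inv_eq_of_mul_eq_one_right (Equiv.ext fun v => ?_)
  simp [hgk, sRefl_sRefl (h.inner_self_of_mem_phi hα)]

theorem affWeyl_induction {P : Equiv.Perm V → Prop} (refl : ∀ g, IsAffRefl a1 a2 g → P g)
    (one : P 1) (mul : ∀ g g', P g → P g' → P (g * g')) {w : Equiv.Perm V}
    (hw : w ∈ AffWeyl a1 a2) : P w :=
  Subgroup.closure_induction'' (fun g hg => refl g hg)
    (fun g hg => (h.inv_eq_self_of_isAffRefl hg).symm ▸ refl g hg) one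
    (fun g g' _ _ => mul g g') hw

def reflection {α : V} (hα : α ∈ Phi a1 a2) (k : ℤ) : AffWeyl a1 a2 :=
  ⟨(show Function.Involutive (sRefl α k) from sRefl_sRefl (h.inner_self_of_mem_phi hα) k).toPerm,
    Subgroup.subset_closure ⟨α, hα, k, fun _ => rfl⟩⟩

theorem reflection_mul_self {α : V} (hα : α ∈ Phi a1 a2) (k : ℤ) :
    h.reflection hα k * h.reflection hα k = 1 :=
  Subtype.ext (Equiv.ext fun v => sRefl_sRefl (h.inner_self_of_mem_phi hα) k v)

theorem isometry_act (w : AffWeyl a1 a2) : Isometry (act w) := by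
  refine h.affWeyl_induction (P := fun g => Isometry g) ?_ isometry_id
    (fun g g' hg hg' => hg.comp hg') w.2
  rintro g ⟨α, hα, k, hg⟩
  simpa only [show ⇑g = sRefl α k from funext hg] using
    isometry_sRefl (h.inner_self_of_mem_phi hα) k

/-- `3 ∣ u - v` says that the translation part lies in the root lattice `ℤ α₁ + ℤ α₂`. -/
theorem exists_isCoordAffine (w : AffWeyl a1 a2) :
    ∃ M ∈ weylMatrices, ∃ u v : ℤ, 3 ∣ u - v ∧ IsCoordAffine a1 a2 (act w) M u v := by
  refine h.affWeyl_induction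
    (P := fun g => ∃ M ∈ weylMatrices, ∃ u v : ℤ, 3 ∣ u - v ∧ IsCoordAffine a1 a2 g M u v)
    ?_ ⟨1, by decide, 0, 0, by decide, fun x => by simp⟩ ?_ w.2
  · rintro g ⟨α, hα, k, hg⟩
    obtain ⟨p, hp, rfl⟩ := h.exists_coeffs_of_mem_phi hα
    refine ⟨reflMatrix p, reflMatrix_mem p hp, k * (2 * p.1 - p.2), k * (2 * p.2 - p.1),
      ⟨k * (p.1 - p.2), by ring⟩, fun x => ?_⟩
    simp only [hg, inner_sRefl, inner_rootOf_left, h.inner_a1_rootOf, h.inner_a2_rootOf,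
      reflMatrix, Matrix.of_apply, Matrix.cons_val', Matrix.cons_val_zero, Matrix.cons_val_one,
      Matrix.empty_val', Matrix.cons_val_fin_one]
    constructor <;> push_cast <;> ring
  · rintro g g' ⟨M, hM, u, v, ⟨a, ha⟩, hg⟩ ⟨N, hN, u', v', ⟨b, hb⟩, hg'⟩
    obtain ⟨⟨c, hc⟩, -⟩ := weylMatrices_rowSum M hM
    exact ⟨M * N, weylMatrices_mul_mem M hM N hN, _, _,
      ⟨c * u' - (M 0 1 - M 1 1) * b + a, by linear_combination u' * hc - (M 0 1 - M 1 1) * hb + ha⟩,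
      hg.comp hg'⟩

theorem coords_sRefl (p : ℤ × ℤ) (k : ℤ) {v : V} {m n e m' n' e' : ℤ}
    (hX : ⟪a1, v⟫ = m + e / 3) (hY : ⟪a2, v⟫ = n + e / 3)
    (hX' : ⟪a1, sRefl (rootOf a1 a2 p) k v⟫ = m' + e' / 3)
    (hY' : ⟪a2, sRefl (rootOf a1 a2 p) k v⟫ = n' + e' / 3) :
    3 * m' + e' =
        3 * m + e - (p.1 * (3 * m + e) + p.2 * (3 * n + e) - 3 * k) * (2 * p.1 - p.2) ∧
      3 * n' + e' =
        3 * n + e - (p.1 * (3 * m + e) + p.2 * (3 * n + e) - 3 * k) * (2 * p.2 - p.1) := by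
  rw [inner_sRefl, inner_rootOf_left, h.inner_a1_rootOf, hX, hY] at hX'
  rw [inner_sRefl, inner_rootOf_left, h.inner_a2_rootOf, hX, hY] at hY'
  constructor <;> apply Int.cast_injective (α := ℝ) <;> push_cast
  · linear_combination -3 * hX'
  · linear_combination -3 * hY'

theorem exists_coords_act_q (hq1 : ⟪a1, q⟫ = 1 / 3) (hq2 : ⟪a2, q⟫ = 1 / 3) (w : AffWeyl a1 a2) :
    ∃ m n e : ℤ, (e = 1 ∨ e = 2) ∧ ⟪a1, act w q⟫ = m + e / 3 ∧ ⟪a2, act w q⟫ = n + e / 3 := by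
  obtain ⟨M, hM, u, v, huv, hw⟩ := h.exists_isCoordAffine w
  obtain ⟨hrow, hrow0⟩ := weylMatrices_rowSum M hM
  have hX : ⟪a1, act w q⟫ = ((M 0 0 + M 0 1 + 3 * u : ℤ) : ℝ) / 3 := by
    rw [(hw q).1, hq1, hq2]; push_cast; ring
  have hY : ⟪a2, act w q⟫ = ((M 1 0 + M 1 1 + 3 * v : ℤ) : ℝ) / 3 := by
    rw [(hw q).2, hq1, hq2]; push_cast; ring
  have hmod : (M 1 0 + M 1 1 + 3 * v) % 3 = (M 0 0 + M 0 1 + 3 * u) % 3 ∧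
      (M 0 0 + M 0 1 + 3 * u) % 3 ≠ 0 := by omega
  generalize M 0 0 + M 0 1 + 3 * u = X at hX hmod
  generalize M 1 0 + M 1 1 + 3 * v = Y at hY hmod
  have hdiv (Z : ℤ) : (Z : ℝ) / 3 = ((Z / 3 : ℤ) : ℝ) + ((Z % 3 : ℤ) : ℝ) / 3 := by
    have := congrArg (Int.cast (R := ℝ)) (Int.mul_ediv_add_emod Z 3)
    push_cast at this
    linarith
  exact ⟨X / 3, Y / 3, X % 3, by omega, by rw [hX, hdiv], by rw [hY, hdiv, hmod.1]⟩

theorem eq_one_of_act_q (hq1 : ⟪a1, q⟫ = 1 / 3) (hq2 : ⟪a2, q⟫ = 1 / 3) {w : AffWeyl a1 a2}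
    (hw : act w q = q) : w = 1 := by
  obtain ⟨M, hM, u, v, huv, hwM⟩ := h.exists_isCoordAffine w
  have e1 : M 0 0 + M 0 1 + 3 * u = 1 := by
    apply Int.cast_injective (α := ℝ)
    have := (hwM q).1
    rw [hw, hq1, hq2] at this
    push_cast
    linarith
  have e2 : M 1 0 + M 1 1 + 3 * v = 1 := by
    apply Int.cast_injective (α := ℝ)
    have := (hwM q).2
    rw [hw, hq1, hq2] at this
    push_cast
    linarith
  -- the rotations of order 3 about `q` have translation parts outside the root lattice
  obtain ⟨rfl, rfl, rfl⟩ : M = 1 ∧ u = 0 ∧ v = 0 := by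
    simp only [weylMatrices, Finset.mem_insert, Finset.mem_singleton] at hM
    rcases hM with rfl | rfl | rfl | rfl | rfl | rfl <;> simp at e1 e2 <;>
      first | omega | exact ⟨rfl, by omega, by omega⟩
  refine Subtype.ext (Equiv.ext fun x => h.ext (x := act w x) ?_ ?_)
  · simpa using (hwM x).1
  · simpa using (hwM x).2

theorem exists_inner_act_eq {α : V} (hα : α ∈ Phi a1 a2) (w : AffWeyl a1 a2) :
    ∃ p ∈ rootCoeffs, ∃ c : ℤ, ∀ x, ⟪α, act w x⟫ = p.1 * ⟪a1, x⟫ + p.2 * ⟪a2, x⟫ + c := by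
  obtain ⟨p, hp, rfl⟩ := h.exists_coeffs_of_mem_phi hα
  obtain ⟨M, hM, u, v, -, hw⟩ := h.exists_isCoordAffine w
  refine ⟨_, weylMatrices_permutes_roots M hM p hp, p.1 * u + p.2 * v, fun x => ?_⟩
  rw [inner_rootOf_left, (hw x).1, (hw x).2]
  push_cast
  ring

theorem wallCount_le_length (hq1 : ⟪a1, q⟫ = 1 / 3) (hq2 : ⟪a2, q⟫ = 1 / 3)
    (l : List (AffWeyl a1 a2)) (hl : ∀ g ∈ l, IsSimpleRefl a1 a2 g) :
    wallCount a1 a2 (act l.prod q) ≤ l.length := by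
  induction l with
  | nil => exact (wallCount_q hq1 hq2).le
  | cons s l ih =>
    rw [List.forall_mem_cons] at hl
    obtain ⟨⟨p, k⟩, hd, hs⟩ := hl.1.exists_eq_sRefl
    obtain ⟨m, n, e, he, hX, hY⟩ := h.exists_coords_act_q hq1 hq2 l.prod
    obtain ⟨m', n', e', he', hX', hY'⟩ := h.exists_coords_act_q hq1 hq2 (s * l.prod)
    have hsv : act (s * l.prod) q = sRefl (rootOf a1 a2 p) k (act l.prod q) := by
      rw [← hs]; rfl
    rw [hsv] at hX' hY'
    obtain ⟨c1, c2⟩ := h.coords_sRefl p k hX hY hX' hY'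
    have := ih hl.2
    rw [List.prod_cons, hsv, wallCount_eq he' hX' hY', List.length_cons]
    rw [wallCount_eq he hX hY] at this
    simp only [simpleReflData, Finset.mem_insert, Finset.mem_singleton, Prod.mk.injEq] at hd
    rcases hd with ⟨⟨rfl, rfl⟩, rfl⟩ | ⟨⟨rfl, rfl⟩, rfl⟩ | ⟨⟨rfl, rfl⟩, rfl⟩ <;>
      ring_nf at c1 c2 <;> (obtain rfl : e' = 3 - e := by omega) <;> omega

theorem eq_one_of_wallCount_eq_zero (hq1 : ⟪a1, q⟫ = 1 / 3) (hq2 : ⟪a2, q⟫ = 1 / 3)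
    {w : AffWeyl a1 a2} (hw : wallCount a1 a2 (act w q) = 0) : w = 1 := by
  obtain ⟨m, n, e, he, hX, hY⟩ := h.exists_coords_act_q hq1 hq2 w
  rw [wallCount_eq he hX hY] at hw
  obtain ⟨rfl, rfl, rfl⟩ : m = 0 ∧ n = 0 ∧ e = 1 := by omega
  refine h.eq_one_of_act_q hq1 hq2 (h.ext ?_ ?_)
  · rw [hX, hq1]; norm_num
  · rw [hY, hq2]; norm_num

theorem exists_simpleRefl_wallCount_lt (hq1 : ⟪a1, q⟫ = 1 / 3) (hq2 : ⟪a2, q⟫ = 1 / 3)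
    (w : AffWeyl a1 a2) (hw : wallCount a1 a2 (act w q) ≠ 0) :
    ∃ s : AffWeyl a1 a2, IsSimpleRefl a1 a2 s ∧ s * s = 1 ∧
      wallCount a1 a2 (act (s * w) q) + 1 = wallCount a1 a2 (act w q) := by
  obtain ⟨m, n, e, he, hX, hY⟩ := h.exists_coords_act_q hq1 hq2 w
  rw [wallCount_eq he hX hY] at hw ⊢
  have key : ∀ d ∈ simpleReflData, (d = ((1, 0), 0) → m < 0) → (d = ((0, 1), 0) → n < 0) →
      (d = ((1, 1), 1) → 0 < m + n + e - 1) → ∃ s : AffWeyl a1 a2, IsSimpleRefl a1 a2 s ∧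
        s * s = 1 ∧
          wallCount a1 a2 (act (s * w) q) + 1 = m.natAbs + n.natAbs + (m + n + e - 1).natAbs := by
    intro d hd h1 h2 h3
    have hα := rootOf_mem_phi (a1 := a1) (a2 := a2) (fst_mem_rootCoeffs_of_mem_simpleReflData d hd)
    refine ⟨h.reflection hα d.2, isSimpleRefl_of_eq_sRefl hd rfl, h.reflection_mul_self hα d.2, ?_⟩
    obtain ⟨m', n', e', he', hX', hY'⟩ := h.exists_coords_act_q hq1 hq2 (h.reflection hα d.2 * w)
    obtain ⟨c1, c2⟩ := h.coords_sRefl d.1 d.2 hX hY hX' hY'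
    rw [wallCount_eq he' hX' hY']
    simp only [simpleReflData, Finset.mem_insert, Finset.mem_singleton] at hd
    rcases hd with rfl | rfl | rfl <;> simp at h1 h2 h3 <;> ring_nf at c1 c2 <;>
      (obtain rfl : e' = 3 - e := by omega) <;> omega
  -- some wall of `A₀` separates `act w q` from `A₀`
  rcases (by omega : m < 0 ∨ n < 0 ∨ 0 < m + n + e - 1) with hc | hc | hc
  · exact key ((1, 0), 0) (by decide) (fun _ => hc) (by simp) (by simp)
  · exact key ((0, 1), 0) (by decide) (by simp) (fun _ => hc) (by simp)
  · exact key ((1, 1), 1) (by decide) (by simp) (by simp) (fun _ => hc)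

theorem exists_word (hq1 : ⟪a1, q⟫ = 1 / 3) (hq2 : ⟪a2, q⟫ = 1 / 3) (w : AffWeyl a1 a2) :
    ∃ l : List (AffWeyl a1 a2), (∀ g ∈ l, IsSimpleRefl a1 a2 g) ∧
      l.length = wallCount a1 a2 (act w q) ∧ l.prod = w := by
  induction hn : wallCount a1 a2 (act w q) using Nat.strong_induction_on generalizing w with
  | _ n ih =>
  rcases Nat.eq_zero_or_pos n with rfl | hpos
  · exact ⟨[], by simp, rfl, (h.eq_one_of_wallCount_eq_zero hq1 hq2 hn).symm⟩
  obtain ⟨s, hs, hss, hlt⟩ := h.exists_simpleRefl_wallCount_lt hq1 hq2 w (by omega)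
  obtain ⟨l, hl, hlen, hprod⟩ := ih _ (by omega) (s * w) rfl
  refine ⟨s :: l, List.forall_mem_cons.mpr ⟨hs, hl⟩, by simp only [List.length_cons]; omega, ?_⟩
  rw [List.prod_cons, hprod, ← mul_assoc, hss, one_mul]

theorem len_eq_wallCount (hq1 : ⟪a1, q⟫ = 1 / 3) (hq2 : ⟪a2, q⟫ = 1 / 3) (w : AffWeyl a1 a2) :
    len a1 a2 w = wallCount a1 a2 (act w q) := by
  obtain ⟨l, hl, hlen, hprod⟩ := h.exists_word hq1 hq2 w
  refine le_antisymm (Nat.sInf_le ⟨l, hl, hlen, hprod⟩) (le_csInf ⟨_, l, hl, hlen, hprod⟩ ?_)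
  rintro n ⟨l', hl', rfl, rfl⟩
  exact h.wallCount_le_length hq1 hq2 l' hl'

theorem closure_A0 :
    closure (A0 a1 a2) = {v | 0 ≤ ⟪a1, v⟫ ∧ 0 ≤ ⟪a2, v⟫ ∧ ⟪a1 + a2, v⟫ ≤ 1} := by
  have hc (β : V) : Continuous fun v : V => ⟪β, v⟫ := continuous_const.inner continuous_id
  refine subset_antisymm (closure_minimal (fun v ⟨h1, h2, h3⟩ => ⟨h1.le, h2.le, h3.le⟩)
    ((isClosed_le continuous_const (hc a1)).inter ((isClosed_le continuous_const (hc a2)).inter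
      (isClosed_le (hc _) continuous_const)))) fun v ⟨h1, h2, h3⟩ => ?_
  -- the open segment from the barycenter to `v` lies in `A₀`
  have hseg : openSegment ℝ (ofCoords a1 a2 (1 / 3) (1 / 3)) v ⊆ A0 a1 a2 := by
    rintro _ ⟨s, t, hs, ht, hst, rfl⟩
    simp only [A0, Set.mem_ofPred_eq, inner_add_right, real_inner_smul_right,
      h.inner_a1_ofCoords, h.inner_a2_ofCoords, inner_add_left] at h3 ⊢
    refine ⟨by positivity, by positivity, by nlinarith⟩
  exact closure_mono hseg (segment_subset_closure_openSegment (right_mem_segment ℝ _ _))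

theorem closure_act_image_A0 (w : AffWeyl a1 a2) :
    closure (act w '' A0 a1 a2) =
      act w '' {v | 0 ≤ ⟪a1, v⟫ ∧ 0 ≤ ⟪a2, v⟫ ∧ ⟪a1 + a2, v⟫ ≤ 1} := by
  rw [← h.closure_A0]
  exact ((IsometryEquiv.mk (w : Equiv.Perm V) (h.isometry_act w)).toHomeomorph.image_closure
    (A0 a1 a2)).symm

/-- The vertices of `w A₀` have integral heights `⟪α, ·⟫ ≤ k` averaging `k - 1/3`, so two of them
lie on `H_{α,k}`. -/
theorem nontrivial_closure_inter_hplane (hq1 : ⟪a1, q⟫ = 1 / 3) (hq2 : ⟪a2, q⟫ = 1 / 3)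
    (w : AffWeyl a1 a2) {α : V} (hα : α ∈ Phi a1 a2) {k : ℤ}
    (hT : ⟪α, act w q⟫ = k - 1 / 3) : (closure (act w '' A0 a1 a2) ∩ Hplane α k).Nontrivial := by
  obtain ⟨p, hp, c, hf⟩ := h.exists_inner_act_eq hα w
  have hk : p.1 + p.2 + 3 * c = 3 * k - 1 := by
    apply Int.cast_injective (α := ℝ)
    have := hf q
    rw [hT, hq1, hq2] at this
    push_cast
    linarith
  rw [h.closure_act_image_A0]
  have key (s t s' t' : ℝ) (hv : 0 ≤ s ∧ 0 ≤ t ∧ s + t ≤ 1) (hv' : 0 ≤ s' ∧ 0 ≤ t' ∧ s' + t' ≤ 1)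
      (hne : (s, t) ≠ (s', t')) (hval : p.1 * s + p.2 * t + c = k)
      (hval' : p.1 * s' + p.2 * t' + c = k) :
      (act w '' {v | 0 ≤ ⟪a1, v⟫ ∧ 0 ≤ ⟪a2, v⟫ ∧ ⟪a1 + a2, v⟫ ≤ 1} ∩ Hplane α k).Nontrivial := by
    have hmem (s t : ℝ) (hv : 0 ≤ s ∧ 0 ≤ t ∧ s + t ≤ 1) :
        ofCoords a1 a2 s t ∈ {v | 0 ≤ ⟪a1, v⟫ ∧ 0 ≤ ⟪a2, v⟫ ∧ ⟪a1 + a2, v⟫ ≤ 1} := by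
      simpa only [Set.mem_ofPred_eq, inner_add_left, h.inner_a1_ofCoords, h.inner_a2_ofCoords]
        using hv
    refine ⟨_, ⟨⟨_, hmem s t hv, rfl⟩, ?_⟩, _, ⟨⟨_, hmem s' t' hv', rfl⟩, ?_⟩, fun heq => hne ?_⟩
    · rwa [Hplane, Set.mem_ofPred_eq, hf, h.inner_a1_ofCoords, h.inner_a2_ofCoords]
    · rwa [Hplane, Set.mem_ofPred_eq, hf, h.inner_a1_ofCoords, h.inner_a2_ofCoords]
    have hyy' := (w : Equiv.Perm V).injective heq
    have e1 := congrArg (⟪a1, ·⟫) hyy'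
    have e2 := congrArg (⟪a2, ·⟫) hyy'
    simp only [h.inner_a1_ofCoords, h.inner_a2_ofCoords] at e1 e2
    rw [e1, e2]
  simp only [rootCoeffs, Finset.mem_insert, Finset.mem_singleton] at hp
  rcases hp with rfl | rfl | rfl | rfl | rfl | rfl
  · omega
  · omega
  · obtain rfl : k = c + 1 := by omega
    exact key 1 0 0 1 (by norm_num) (by norm_num) (by norm_num) (by push_cast; ring)
      (by push_cast; ring)
  · obtain rfl : k = c := by omega
    exact key 0 0 0 1 (by norm_num) (by norm_num) (by norm_num) (by push_cast; ring)
      (by push_cast; ring)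
  · obtain rfl : k = c := by omega
    exact key 0 0 1 0 (by norm_num) (by norm_num) (by norm_num) (by push_cast; ring)
      (by push_cast; ring)
  · omega

/-- The vertices of `w A₀` have integral heights `⟪α, ·⟫ ≤ k` averaging `k - 2/3`, so only one of
them lies on `H_{α,k}`. -/
theorem subsingleton_closure_inter_hplane (hq1 : ⟪a1, q⟫ = 1 / 3) (hq2 : ⟪a2, q⟫ = 1 / 3)
    (w : AffWeyl a1 a2) {α : V} (hα : α ∈ Phi a1 a2) {k : ℤ}
    (hT : ⟪α, act w q⟫ = k - 2 / 3) : (closure (act w '' A0 a1 a2) ∩ Hplane α k).Subsingleton := by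
  obtain ⟨p, hp, c, hf⟩ := h.exists_inner_act_eq hα w
  have hk : p.1 + p.2 + 3 * c = 3 * k - 2 := by
    apply Int.cast_injective (α := ℝ)
    have := hf q
    rw [hT, hq1, hq2] at this
    push_cast
    linarith
  rw [h.closure_act_image_A0]
  rintro _ ⟨⟨y, ⟨hy1, hy2, hy3⟩, rfl⟩, hy⟩ _ ⟨⟨y', ⟨hy1', hy2', hy3'⟩, rfl⟩, hy'⟩
  rw [Hplane, Set.mem_ofPred_eq, hf] at hy hy'
  rw [inner_add_left] at hy3 hy3'
  have hk' : (3 * k : ℝ) = p.1 + p.2 + 3 * c + 2 := by exact_mod_cast (by omega : 3 * k = _)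
  simp only [rootCoeffs, Finset.mem_insert, Finset.mem_singleton] at hp
  rcases hp with rfl | rfl | rfl | rfl | rfl | rfl <;> (try omega) <;>
    · push_cast at hk' hy hy'
      exact congrArg (act w) (h.ext (by linarith) (by linarith))

theorem wallCount_sRefl_toward_chamber (hq1 : ⟪a1, q⟫ = 1 / 3) (hq2 : ⟪a2, q⟫ = 1 / 3)
    {w : AffWeyl a1 a2} (hns : ¬ IsSpiral a1 a2 q w) {p : ℤ × ℤ} (hp : p ∈ rootCoeffs)
    (hα : PointsInto a1 a2 (chamberOf a1 a2 q w) (rootOf a1 a2 p)) {k : ℤ}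
    (hk : (k : ℝ) - 1 < ⟪rootOf a1 a2 p, act w q⟫ ∧ ⟪rootOf a1 a2 p, act w q⟫ < k) :
    1 ≤ k ∧ ∃ j : ℤ, (j = 1 ∨ j = 2) ∧ ⟪rootOf a1 a2 p, act w q⟫ = k - j / 3 ∧
      (wallCount a1 a2 (sRefl (rootOf a1 a2 p) k (act w q)) : ℤ) =
        wallCount a1 a2 (act w q) + 2 * j - 1 := by
  obtain ⟨m, n, e, he, hX, hY⟩ := h.exists_coords_act_q hq1 hq2 w
  obtain ⟨f1, f2, f3⟩ := floor_coords he hX hY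
  have hC : chamberOf a1 a2 q w ⊆ (StripUnion a1 a2)ᶜ := connectedComponentIn_subset _ _
  have hv : act w q ∈ chamberOf a1 a2 q w := mem_connectedComponentIn hns
  have hb1 := hα.floor_bounds hC hv (fun _ hx => Or.inl (Or.inl hx)) (c := 2 * p.1 - p.2)
    (by rw [h.inner_a1_rootOf]; push_cast; ring)
  have hb2 := hα.floor_bounds hC hv (fun _ hx => Or.inl (Or.inr hx)) (c := 2 * p.2 - p.1)
    (by rw [h.inner_a2_rootOf]; push_cast; ring)
  have hb3 := hα.floor_bounds hC hv (fun _ hx => Or.inr hx) (c := p.1 + p.2)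
    (by rw [inner_add_left, h.inner_a1_rootOf, h.inner_a2_rootOf]; push_cast; ring)
  rw [f1] at hb1
  rw [f2] at hb2
  rw [f3] at hb3
  have hT : ⟪rootOf a1 a2 p, act w q⟫ = ((p.1 * (3 * m + e) + p.2 * (3 * n + e) : ℤ) : ℝ) / 3 := by
    rw [inner_rootOf_left, hX, hY]; push_cast; ring
  generalize hTdef : p.1 * (3 * m + e) + p.2 * (3 * n + e) = T at hT
  have hj12 : 3 * k - T = 1 ∨ 3 * k - T = 2 := by
    rw [hT] at hk
    have h0 : 0 < 3 * k - T := by exact_mod_cast (by push_cast; linarith : (0 : ℝ) < (3 * k - T : ℤ))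
    have h3 : 3 * k - T < 3 := by exact_mod_cast (by push_cast; linarith : ((3 * k - T : ℤ) : ℝ) < 3)
    omega
  have hr := rootOf_mem_phi (a1 := a1) (a2 := a2) hp
  obtain ⟨m', n', e', he', hX', hY'⟩ := h.exists_coords_act_q hq1 hq2 (h.reflection hr k * w)
  obtain ⟨c1, c2⟩ := h.coords_sRefl p k hX hY hX' hY'
  obtain ⟨hk1, hcount⟩ := natAbs_reflect_toward_chamber (j := 3 * k - T) hp he he' hj12 hb1 hb2 hb3
    (by omega) c1 c2
  refine ⟨hk1, 3 * k - T, hj12, ?_, ?_⟩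
  · rw [hT]; push_cast; ring
  · rw [show sRefl (rootOf a1 a2 p) k (act w q) = act (h.reflection hr k * w) q from rfl,
      wallCount_eq he' hX' hY', wallCount_eq he hX hY]
    exact hcount

end IsA2Basis

/-- **Lemma.** Let `w` be non-spiral, `α` the root pointing into the chamber of `w`, and
`k ∈ ℤ` with `k − 1 < (α,v) < k` for all `v ∈ w A₀`. Then `k ≥ 1`; if `cl(w A₀) ∩ H_{α,k}` is
an edge of the alcove (contains more than one point) then `ℓ(s_{α,k} w) = ℓ(w) + 1`, and if it
is a single point (a vertex) then `ℓ(s_{α,k} w) = ℓ(w) + 3`. -/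
theorem length_reflect_toward_chamber
    (a1 a2 q : V)
    (hnorm1 : ⟪a1, a1⟫ = 2) (hnorm2 : ⟪a2, a2⟫ = 2) (hip : ⟪a1, a2⟫ = -1)
    (hq1 : ⟪a1, q⟫ = 1/3) (hq2 : ⟪a2, q⟫ = 1/3)
    (w : AffWeyl a1 a2) (hns : ¬ IsSpiral a1 a2 q w)
    (α : V) (hα : PointsInto a1 a2 (chamberOf a1 a2 q w) α)
    (k : ℤ)
    (hk : ∀ v ∈ act w '' A0 a1 a2, (k : ℝ) - 1 < ⟪α, v⟫ ∧ ⟪α, v⟫ < (k : ℝ))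
    (r : AffWeyl a1 a2) (hr : ∀ v : V, act r v = sRefl α k v) :
    1 ≤ k ∧
    ((closure (act w '' A0 a1 a2) ∩ Hplane α k).Nontrivial →
      len a1 a2 (r * w) = len a1 a2 w + 1) ∧
    ((∃ p : V, closure (act w '' A0 a1 a2) ∩ Hplane α k = {p}) →
      len a1 a2 (r * w) = len a1 a2 w + 3) := by
  have h : IsA2Basis a1 a2 := ⟨hnorm1, hnorm2, hip⟩
  have hq : q ∈ A0 a1 a2 := ⟨by rw [hq1]; norm_num, by rw [hq2]; norm_num,
    by rw [inner_add_left, hq1, hq2]; norm_num⟩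
  obtain ⟨p, hp, rfl⟩ := h.exists_coeffs_of_mem_phi hα.1
  obtain ⟨hk1, j, hj, hT, hcount⟩ :=
    h.wallCount_sRefl_toward_chamber hq1 hq2 hns hp hα (hk _ ⟨q, hq, rfl⟩)
  have hlen : (len a1 a2 (r * w) : ℤ) = len a1 a2 w + 2 * j - 1 := by
    rw [h.len_eq_wallCount hq1 hq2, h.len_eq_wallCount hq1 hq2, ← hcount]
    exact congrArg (fun v => (wallCount a1 a2 v : ℤ)) (hr _)
  refine ⟨hk1, fun hedge => ?_, fun ⟨z, hz⟩ => ?_⟩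
  · rcases hj with rfl | rfl
    · omega
    · exact absurd (h.subsingleton_closure_inter_hplane hq1 hq2 w (rootOf_mem_phi hp)
        (by rw [hT]; ring)) hedge.not_subsingleton
  · rcases hj with rfl | rfl
    · have := h.nontrivial_closure_inter_hplane hq1 hq2 w (rootOf_mem_phi hp) (by rw [hT]; ring)
      rw [hz] at this
      exact absurd this Set.not_nontrivial_singleton
    · omega
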